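/- Let (Ω, μ) be a probability space and X : Ω → ℝ a measurable random variable with |X| ≤ K almost everywhere for some constant K > 0. Fix a real advantage A and a real clipping parameter ε > 0, and define the per-sample GRPO objective g : ℝ → ℝ by g(r) = min(r·A, clip(r, 1−ε, 1+ε)·A), where clip(r, a, b) = max(a, min(r, b)). Then the variance of the estimated GRPO loss satisfies Var[g(exp(X))] ≤ A²·exp(2K)·Var[X]. -/

import Mathlib

open MeasureTheory ProbabilityTheory

/-- `clip r a b = max a (min r b)`. -/
def clip (r a b : ℝ) : ℝ := max a (min r b)

/-- The per-sample GRPO objective `g(r) = min (r·A) (clip(r, 1−ε, 1+ε)·A)`. -/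
def grpoObjective (A ε r : ℝ) : ℝ := min (r * A) (clip r (1 - ε) (1 + ε) * A)

lemma clip_lipschitz (a b r s : ℝ) : |clip r a b - clip s a b| ≤ |r - s| := by
  unfold clip
  refine (abs_max_sub_max_le_max _ _ _ _).trans ?_
  simp only [sub_self, abs_zero]
  refine max_le (abs_nonneg _) ?_
  refine (abs_min_sub_min_le_max _ _ _ _).trans ?_
  simp [abs_nonneg]

lemma grpo_lipschitz (A ε r s : ℝ) :
    |grpoObjective A ε r - grpoObjective A ε s| ≤ |A| * |r - s| := by
  unfold grpoObjective
  refine (abs_min_sub_min_le_max _ _ _ _).trans (max_le ?_ ?_)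
  · rw [← sub_mul, abs_mul, mul_comm]
  · rw [← sub_mul, abs_mul, mul_comm]
    exact mul_le_mul_of_nonneg_left (clip_lipschitz _ _ _ _) (abs_nonneg _)

lemma exp_lipschitz_of_le {K x y : ℝ} (hx : x ≤ K) (hy : y ≤ K) :
    |Real.exp x - Real.exp y| ≤ Real.exp K * |x - y| := by
  wlog h : y ≤ x generalizing x y
  · rw [abs_sub_comm, abs_sub_comm x y]; exact this hy hx (le_of_not_ge h)
  rw [abs_of_nonneg (sub_nonneg.2 (Real.exp_le_exp.2 h)), abs_of_nonneg (sub_nonneg.2 h)]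
  have h1 : Real.exp (y - x) + (x - y) ≥ 1 := by
    have := Real.add_one_le_exp (y - x); linarith
  have h2 : Real.exp x ≤ Real.exp K := Real.exp_le_exp.2 hx
  have h3 : Real.exp x - Real.exp y = Real.exp x * (1 - Real.exp (y - x)) := by
    rw [mul_sub, mul_one, ← Real.exp_add]; ring_nf
  nlinarith [Real.exp_pos x]

lemma variance_le_integral_sq {Ω : Type*} [MeasurableSpace Ω] (μ : Measure Ω)
    [IsProbabilityMeasure μ] {Y : Ω → ℝ} (hY : MemLp Y 2 μ) (c : ℝ) :
    variance Y μ ≤ ∫ ω, (Y ω - c) ^ 2 ∂μ := by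
  set m := ∫ ω, Y ω ∂μ with hm
  have hYi : Integrable Y μ := hY.integrable one_le_two
  have i1 : Integrable (fun ω => (Y ω - m) ^ 2) μ := by
    have := (hY.sub (memLp_const m)).integrable_sq
    simpa [sq] using this
  have i2 : Integrable (fun ω => 2 * (m - c) * (Y ω - m)) μ :=
    ((hYi.sub (integrable_const m)).const_mul _)
  have key : ∀ ω, (Y ω - c) ^ 2
      = (Y ω - m) ^ 2 + (2 * (m - c) * (Y ω - m) + (m - c) ^ 2) := by
    intro ω; ring
  have hveq : variance Y μ = ∫ ω, (Y ω - m) ^ 2 ∂μ := by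
    rw [variance_eq_integral hY.1.aemeasurable]
  rw [hveq]
  calc ∫ ω, (Y ω - m) ^ 2 ∂μ
      ≤ ∫ ω, (Y ω - m) ^ 2 ∂μ
        + (∫ ω, 2 * (m - c) * (Y ω - m) ∂μ + (m - c) ^ 2) := by
        have hz : ∫ ω, 2 * (m - c) * (Y ω - m) ∂μ = 0 := by
          rw [integral_const_mul, integral_sub hYi (integrable_const m)]
          simp [← hm]
        rw [hz]
        nlinarith [sq_nonneg (m - c)]
    _ = ∫ ω, (Y ω - c) ^ 2 ∂μ := by
        have e1 : ∫ ω, ((Y ω - m) ^ 2 + (2 * (m - c) * (Y ω - m) + (m - c) ^ 2)) ∂μ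
            = ∫ ω, (Y ω - m) ^ 2 ∂μ + ∫ ω, (2 * (m - c) * (Y ω - m) + (m - c) ^ 2) ∂μ :=
          integral_add i1 (i2.add (integrable_const _))
        have e2 : ∫ ω, (2 * (m - c) * (Y ω - m) + (m - c) ^ 2) ∂μ
            = ∫ ω, 2 * (m - c) * (Y ω - m) ∂μ + ∫ _ω, (m - c) ^ 2 ∂μ :=
          integral_add i2 (integrable_const _)
        have e3 : ∫ _ω, (m - c) ^ 2 ∂μ = (m - c) ^ 2 := by simp
        simp only [key, e1, e2, e3]

/-- **Per-sample estimation-variance bound of Theorem 3.**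
If `X` is a measurable random variable on a probability space with `|X| ≤ K`
almost everywhere for some `K > 0`, then for the per-sample GRPO objective `g`
with advantage `A` and clipping parameter `ε > 0`,
`Var[g(exp X)] ≤ A²·exp(2K)·Var[X]`. -/
theorem grpo_variance_le
    {Ω : Type*} [MeasurableSpace Ω] (μ : Measure Ω) [IsProbabilityMeasure μ]
    (X : Ω → ℝ) (hX : Measurable X)
    (K : ℝ) (hK : 0 < K) (hbound : ∀ᵐ ω ∂μ, |X ω| ≤ K)
    (A ε : ℝ) (hε : 0 < ε) :
    variance (fun ω => grpoObjective A ε (Real.exp (X ω))) μ ≤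
      A ^ 2 * Real.exp (2 * K) * variance X μ := by
  set L : ℝ := |A| * Real.exp K with hL
  set Y : Ω → ℝ := fun ω => grpoObjective A ε (Real.exp (X ω)) with hYdef
  -- continuity / measurability of the objective
  have hgc : Continuous (grpoObjective A ε) := by
    unfold grpoObjective clip
    fun_prop
  have hYmeas : Measurable Y :=
    (hgc.measurable).comp (Real.measurable_exp.comp hX)
  -- X ∈ L²
  have hX2 : MemLp X 2 μ :=
    (memLp_top_of_bound hX.aestronglyMeasurable K
      (hbound.mono fun ω h => by simpa [Real.norm_eq_abs] using h)).mono_exponent le_top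
  have hXi : Integrable X μ := hX2.integrable one_le_two
  set m : ℝ := ∫ ω, X ω ∂μ with hm
  have hmK : |m| ≤ K := by
    have h1 : |m| ≤ ∫ ω, |X ω| ∂μ := by
      simpa [Real.norm_eq_abs] using norm_integral_le_integral_norm (μ := μ) X
    have h2 : ∫ ω, |X ω| ∂μ ≤ ∫ _ω, K ∂μ :=
      integral_mono_ae hXi.abs (integrable_const K) hbound
    have h3 : ∫ _ω, (K : ℝ) ∂μ = K := by simp
    linarith
  set c : ℝ := grpoObjective A ε (Real.exp m) with hc
  -- a.e. pointwise Lipschitz bound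
  have hae : ∀ᵐ ω ∂μ, |Y ω - c| ≤ L * |X ω - m| := by
    filter_upwards [hbound] with ω hω
    calc |Y ω - c| ≤ |A| * |Real.exp (X ω) - Real.exp m| := grpo_lipschitz _ _ _ _
      _ ≤ |A| * (Real.exp K * |X ω - m|) := by
          exact mul_le_mul_of_nonneg_left
            (exp_lipschitz_of_le ((abs_le.1 hω).2) ((abs_le.1 hmK).2)) (abs_nonneg _)
      _ = L * |X ω - m| := by ring
  -- Y ∈ L²
  have hY2 : MemLp Y 2 μ := by
    refine (memLp_top_of_bound hYmeas.aestronglyMeasurable (L * (|m| + K) + |c|) ?_).mono_exponent le_top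
    filter_upwards [hae, hbound] with ω h1 h2
    have hLnn : 0 ≤ L := by positivity
    have : |Y ω| ≤ L * |X ω - m| + |c| := by
      calc |Y ω| = |(Y ω - c) + c| := by ring_nf
        _ ≤ |Y ω - c| + |c| := abs_add_le _ _
        _ ≤ L * |X ω - m| + |c| := by linarith
    have h3 : |X ω - m| ≤ |m| + K := by
      have := abs_sub_abs_le_abs_sub (X ω) m
      have := abs_sub (X ω) m
      calc |X ω - m| ≤ |X ω| + |m| := abs_sub _ _
        _ ≤ |m| + K := by linarith
    rw [Real.norm_eq_abs]
    nlinarith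
  -- main chain
  have hi2 : Integrable (fun ω => L ^ 2 * (X ω - m) ^ 2) μ := by
    have := (hX2.sub (memLp_const m)).integrable_sq
    exact ((by simpa [sq] using this : Integrable (fun ω => (X ω - m) ^ 2) μ).const_mul _)
  calc variance Y μ ≤ ∫ ω, (Y ω - c) ^ 2 ∂μ := variance_le_integral_sq μ hY2 c
    _ ≤ ∫ ω, L ^ 2 * (X ω - m) ^ 2 ∂μ := by
        refine integral_mono_of_nonneg (Filter.Eventually.of_forall fun ω => sq_nonneg _) hi2 ?_
        filter_upwards [hae] with ω h
        have h0 : |Y ω - c| ^ 2 ≤ (L * |X ω - m|) ^ 2 :=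
          pow_le_pow_left₀ (abs_nonneg _) h 2
        calc (Y ω - c) ^ 2 = |Y ω - c| ^ 2 := (sq_abs _).symm
          _ ≤ (L * |X ω - m|) ^ 2 := h0
          _ = L ^ 2 * (X ω - m) ^ 2 := by rw [mul_pow, sq_abs]
    _ = L ^ 2 * ∫ ω, (X ω - m) ^ 2 ∂μ := integral_const_mul _ _
    _ = A ^ 2 * Real.exp (2 * K) * variance X μ := by
        have hv : variance X μ = ∫ ω, (X ω - m) ^ 2 ∂μ := by
          rw [variance_eq_integral hX2.1.aemeasurable]
        have he : Real.exp K ^ 2 = Real.exp (2 * K) := by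
          rw [sq, ← Real.exp_add, two_mul]
        rw [hv, hL, mul_pow, sq_abs, he]
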